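/- arXiv:1209.4287 — 5 statements merged into one kernel-verified Lean document; each statement's English description precedes it below -/
import Mathlib

section
/- Let S = {x_1,...,x_n} be a finite meet-closed subset of a lattice, indexed so that x_i ≼ x_j implies i ≤ j, and f a real-valued function. Then the meet matrix (f(x_i ∧ x_j))_{i,j} is positive definite if and only if Ψ(x_i) > 0 for all i = 1,...,n, where Ψ(x_k) = Σ_{x_v ≼ x_k} f(x_v) μ_S(x_v, x_k). -/
open scoped Classical
open Matrix

/-! The meet matrix factors as `ζ * diagonal Ψ * ζᵀ`, where `ζ i k = [x k ≤ x i]` is the zeta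
matrix of `S`: since `S` is meet closed, `Ψ v` occurs in `f (x i ⊓ x j)` exactly when
`x v ≤ x i` and `x v ≤ x j`. The indexing makes `ζ` unitriangular, so this is a congruence by an
invertible matrix, and the meet matrix is positive definite iff `diagonal Ψ` is. -/

section ZetaMatrix

variable {ι P R : Type*}

noncomputable def zetaMatrix [Zero R] [One R] [Preorder P] (x : ι → P) : Matrix ι ι R :=
  Matrix.of fun i k => if x k ≤ x i then 1 else 0

theorem zetaMatrix_mul_diagonal_mul_transpose_apply [Fintype ι] [DecidableEq ι]
    [NonAssocSemiring R] [Preorder P] (x : ι → P) (Ψ : ι → R) (i j : ι) :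
    (zetaMatrix x * diagonal Ψ * (zetaMatrix x)ᵀ : Matrix ι ι R) i j =
      ∑ v ∈ Finset.univ.filter fun v => x v ≤ x i ∧ x v ≤ x j, Ψ v := by
  rw [mul_apply, Finset.sum_filter]
  simp only [mul_diagonal, transpose_apply, zetaMatrix, of_apply]
  refine Finset.sum_congr rfl fun v _ => ?_
  by_cases hi : x v ≤ x i <;> by_cases hj : x v ≤ x j <;> simp [hi, hj]

theorem meetMatrix_eq_zetaMatrix_mul_diagonal_mul_transpose [Fintype ι] [DecidableEq ι]
    [NonAssocSemiring R] [SemilatticeInf P] (x : ι → P)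
    (hmeet : ∀ i j, ∃ k, x k = x i ⊓ x j) (f : P → R) (Ψ : ι → R)
    (hΨ : ∀ k, f (x k) = ∑ v ∈ Finset.univ.filter fun v => x v ≤ x k, Ψ v) :
    Matrix.of (fun i j => f (x i ⊓ x j)) = zetaMatrix x * diagonal Ψ * (zetaMatrix x)ᵀ := by
  ext i j
  obtain ⟨k, hk⟩ := hmeet i j
  rw [of_apply, zetaMatrix_mul_diagonal_mul_transpose_apply, ← hk, hΨ k]
  simp_rw [hk, le_inf_iff]

theorem det_zetaMatrix [Fintype ι] [LinearOrder ι] [CommRing R] [Preorder P] (x : ι → P)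
    (hord : ∀ i j, x i ≤ x j → i ≤ j) : (zetaMatrix x : Matrix ι ι R).det = 1 := by
  have hlower : (zetaMatrix x : Matrix ι ι R).IsLowerTriangular := fun i k hik => by
    simp only [zetaMatrix, of_apply, ite_eq_right_iff]
    exact fun hle => absurd (hord k i hle) (not_le.mpr hik)
  rw [det_of_isLowerTriangular _ hlower]
  simp [zetaMatrix]

end ZetaMatrix

theorem meet_matrix_posDef_iff_general {P : Type*} [Lattice P] {n : ℕ} (x : Fin n → P)
    (hord : ∀ i j, x i ≤ x j → i ≤ j)
    (hmeet : ∀ i j, ∃ k, x k = x i ⊓ x j)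
    (f : P → ℝ) (Ψ : Fin n → ℝ)
    (hΨ : ∀ k, f (x k) = ∑ v ∈ Finset.univ.filter fun v => x v ≤ x k, Ψ v) :
    (Matrix.of fun i j => f (x i ⊓ x j)).PosDef ↔ ∀ i, 0 < Ψ i := by
  have hζ : IsUnit (zetaMatrix x : Matrix (Fin n) (Fin n) ℝ) := by
    rw [isUnit_iff_isUnit_det, det_zetaMatrix x hord]
    exact isUnit_one
  rw [meetMatrix_eq_zetaMatrix_mul_diagonal_mul_transpose x hmeet f Ψ hΨ,
    ← conjTranspose_eq_transpose_of_trivial, ← star_eq_conjTranspose,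
    hζ.posDef_star_right_conjugate_iff, posDef_diagonal_iff]

/-- **Positive definiteness of a meet matrix on a meet-closed set**:
`(f (x i ⊓ x j))` is positive definite iff `Ψ (x i) > 0` for all `i`, where
`Ψ` is determined by `f (x k) = ∑_{x v ≼ x k} Ψ v`. -/
theorem meet_matrix_posDef_iff {P : Type*} [Lattice P] {n : ℕ} (x : Fin n → P)
    (hinj : Function.Injective x)
    (hord : ∀ i j, x i ≤ x j → i ≤ j)
    (hmeet : ∀ i j, ∃ k, x k = x i ⊓ x j)
    (f : P → ℝ) (Ψ : Fin n → ℝ)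
    (hΨ : ∀ k, f (x k) = ∑ v ∈ Finset.univ.filter fun v => x v ≤ x k, Ψ v) :
    (Matrix.of fun i j => f (x i ⊓ x j)).PosDef ↔ ∀ i, 0 < Ψ i :=
  meet_matrix_posDef_iff_general x hord hmeet f Ψ hΨ
end

section
/- Let S = {x_1,...,x_n} be a finite join-closed subset of a lattice, indexed so that x_i ≼ x_j implies i ≤ j, and f a real-valued function. Then the join matrix (f(x_i ∨ x_j))_{i,j} is positive definite if and only if Φ(x_i) > 0 for all i = 1,...,n, where Φ(x_k) = Σ_{x_k ≼ x_v} f(x_v) μ_S(x_k, x_v). -/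
/-!
Let `Z` be the zeta matrix of `S`, `Z i v = 1` if `x i ≤ x v` and `0` otherwise. Then
`(Z * diagonal Φ * Zᵀ) i j` sums `Φ v` over the `v` above both `x i` and `x j`, i.e. above
`x i ⊔ x j`; since `S` is join closed this is `f (x i ⊔ x j)` by Möbius inversion (`hΦ`).
The indexing makes `Z` unitriangular, hence invertible, so the join matrix is congruent to
`diagonal Φ` and is positive definite exactly when every `Φ i` is positive.
-/

open scoped Classical
open Matrix

namespace Matrix

variable {ι P R : Type*}

variable (R) in
noncomputable def zetaMatrix [Zero R] [One R] [LE P] (x : ι → P) : Matrix ι ι R :=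
  of fun i v => if x i ≤ x v then 1 else 0

section Triangular

variable [LinearOrder ι] [Preorder P] [CommRing R] {x : ι → P}

theorem zetaMatrix_isUpperTriangular (hord : ∀ i j, x i ≤ x j → i ≤ j) :
    (zetaMatrix R x).IsUpperTriangular := fun i j hji => by
  simp only [zetaMatrix, of_apply, ite_eq_right_iff]
  exact fun hij => absurd (hord i j hij) (not_le.mpr hji)

variable [Fintype ι]

theorem det_zetaMatrix (hord : ∀ i j, x i ≤ x j → i ≤ j) : (zetaMatrix R x).det = 1 := by
  rw [det_of_isUpperTriangular (zetaMatrix_isUpperTriangular hord)]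
  simp [zetaMatrix]

theorem isUnit_zetaMatrix (hord : ∀ i j, x i ≤ x j → i ≤ j) : IsUnit (zetaMatrix R x) := by
  rw [isUnit_iff_isUnit_det, det_zetaMatrix hord]
  exact isUnit_one

end Triangular

section Factorization

variable [Fintype ι] [DecidableEq ι] [SemilatticeSup P] [CommSemiring R]

theorem zetaMatrix_mul_diagonal_mul_transpose_apply (x : ι → P) (Φ : ι → R) (i j : ι) :
    (zetaMatrix R x * diagonal Φ * (zetaMatrix R x)ᵀ) i j =
      ∑ v ∈ Finset.univ.filter fun v => x i ⊔ x j ≤ x v, Φ v := by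
  simp only [mul_apply, diagonal_apply, transpose_apply, zetaMatrix, of_apply, mul_ite,
    mul_zero, Finset.sum_ite_eq', Finset.mem_univ, if_true, Finset.sum_filter, sup_le_iff]
  refine Finset.sum_congr rfl fun v _ => ?_
  split_ifs <;> simp_all

theorem of_sup_eq_zetaMatrix_mul_diagonal_mul_transpose {x : ι → P}
    (hjoin : ∀ i j, ∃ k, x k = x i ⊔ x j) (f : P → R) {Φ : ι → R}
    (hΦ : ∀ k, f (x k) = ∑ v ∈ Finset.univ.filter fun v => x k ≤ x v, Φ v) :
    of (fun i j => f (x i ⊔ x j)) = zetaMatrix R x * diagonal Φ * (zetaMatrix R x)ᵀ := by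
  ext i j
  obtain ⟨k, hk⟩ := hjoin i j
  rw [zetaMatrix_mul_diagonal_mul_transpose_apply, of_apply, ← hk, hΦ k]

end Factorization

end Matrix

theorem join_matrix_posDef_iff_general {P : Type*} [Lattice P] {n : ℕ} (x : Fin n → P)
    (hord : ∀ i j, x i ≤ x j → i ≤ j)
    (hjoin : ∀ i j, ∃ k, x k = x i ⊔ x j)
    (f : P → ℝ) (Φ : Fin n → ℝ)
    (hΦ : ∀ k, f (x k) = ∑ v ∈ Finset.univ.filter fun v => x k ≤ x v, Φ v) :
    (Matrix.of fun i j => f (x i ⊔ x j)).PosDef ↔ ∀ i, 0 < Φ i := by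
  rw [of_sup_eq_zetaMatrix_mul_diagonal_mul_transpose hjoin f hΦ,
    ← conjTranspose_eq_transpose_of_trivial, ← star_eq_conjTranspose,
    (isUnit_zetaMatrix hord).posDef_star_right_conjugate_iff, posDef_diagonal_iff]

/-- **Positive definiteness of a join matrix on a join-closed set**:
`(f (x i ⊔ x j))` is positive definite iff `Φ (x i) > 0` for all `i`. -/
theorem join_matrix_posDef_iff {P : Type*} [Lattice P] {n : ℕ} (x : Fin n → P)
    (hinj : Function.Injective x)
    (hord : ∀ i j, x i ≤ x j → i ≤ j)
    (hjoin : ∀ i j, ∃ k, x k = x i ⊔ x j)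
    (f : P → ℝ) (Φ : Fin n → ℝ)
    (hΦ : ∀ k, f (x k) = ∑ v ∈ Finset.univ.filter fun v => x k ≤ x v, Φ v) :
    (Matrix.of fun i j => f (x i ⊔ x j)).PosDef ↔ ∀ i, 0 < Φ i :=
  join_matrix_posDef_iff_general x hord hjoin f Φ hΦ
end

section
/- For α > 0 and any finite set S = {x_1,...,x_n} of distinct positive integers, the reciprocal power LCM matrix with (i,j) entry 1/lcm(x_i, x_j)^α is positive definite. -/
/-!
Since `lcm a b * gcd a b = a * b`, the matrix is `D * G * D` with `D = diag (x i ^ (-α))` and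
`G = (gcd (x i) (x j) ^ α)`, so it suffices that `G` is positive definite. Writing
`n ^ α = ∑ d ∣ n, J_α d` with the Jordan function `J_α = μ * (· ^ α)`, which is positive for
`α > 0` because `J_α (p ^ (k + 1)) = p ^ ((k + 1) α) - p ^ (k α)`, gives Smith's factorisation
`G = Eᵀ * diag (J_α) * E` with the incidence matrix `E d i = [d ∣ x i]`. Finally `E` is injective:
if `E v = 0`, the row of `E` indexed by the largest `x i` with `v i ≠ 0` sees only `v i`.
-/

open Finset Matrix
open scoped ArithmeticFunction.Moebius ArithmeticFunction.zeta

namespace ArithmeticFunction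

noncomputable def rpow (α : ℝ) : ArithmeticFunction ℝ :=
  ⟨fun n => if n = 0 then 0 else (n : ℝ) ^ α, by simp⟩

theorem rpow_apply {α : ℝ} {n : ℕ} (hn : n ≠ 0) : rpow α n = (n : ℝ) ^ α := if_neg hn

theorem isMultiplicative_rpow (α : ℝ) : (rpow α).IsMultiplicative := by
  refine IsMultiplicative.iff_ne_zero.mpr ⟨rpow_apply one_ne_zero |>.trans (by simp), ?_⟩
  intro m n hm hn _
  rw [rpow_apply (mul_ne_zero hm hn), rpow_apply hm, rpow_apply hn, Nat.cast_mul,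
    Real.mul_rpow (by positivity) (by positivity)]

/-- Jordan's totient function with a real exponent. -/
noncomputable def jordan (α : ℝ) : ArithmeticFunction ℝ := (μ : ArithmeticFunction ℝ) * rpow α

theorem isMultiplicative_jordan (α : ℝ) : (jordan α).IsMultiplicative :=
  isMultiplicative_moebius.intCast.mul (isMultiplicative_rpow α)

theorem sum_divisors_jordan (α : ℝ) {n : ℕ} (hn : n ≠ 0) :
    ∑ d ∈ n.divisors, jordan α d = (n : ℝ) ^ α := by
  have hζ : jordan α * ζ = rpow α := by
    rw [jordan, mul_comm _ (rpow α), mul_assoc, coe_moebius_mul_coe_zeta, mul_one]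
  rw [← coe_mul_zeta_apply, hζ, rpow_apply hn]

theorem jordan_apply_prime_pow_succ (α : ℝ) {p : ℕ} (hp : p.Prime) (k : ℕ) :
    jordan α (p ^ (k + 1)) = ((p ^ (k + 1) : ℕ) : ℝ) ^ α - ((p ^ k : ℕ) : ℝ) ^ α := by
  have hsum := fun k => (sum_divisors_jordan α (pow_ne_zero k hp.ne_zero)).symm
  rw [hsum (k + 1), hsum k, Nat.sum_divisors_prime_pow hp, Nat.sum_divisors_prime_pow hp,
    sum_range_succ, add_sub_cancel_left]

theorem jordan_pos {α : ℝ} (hα : 0 < α) {n : ℕ} (hn : n ≠ 0) : 0 < jordan α n := by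
  rw [(isMultiplicative_jordan α).multiplicative_factorization _ hn]
  refine Finset.prod_pos fun p hp => ?_
  have hp' : p.Prime := Nat.prime_of_mem_primeFactors (Nat.support_factorization n ▸ hp)
  obtain ⟨k, hk⟩ := Nat.exists_eq_succ_of_ne_zero (Finsupp.mem_support_iff.mp hp)
  show 0 < jordan α (p ^ n.factorization p)
  rw [hk, jordan_apply_prime_pow_succ α hp', sub_pos]
  exact Real.rpow_lt_rpow (by positivity) (by exact_mod_cast Nat.pow_lt_pow_succ hp'.one_lt) hα

end ArithmeticFunction

section GcdMatrix

variable {ι : Type*} [Fintype ι]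

def divisorsOfValues (x : ι → ℕ) : Finset ℕ := univ.biUnion fun i => (x i).divisors

def divisorIncidence (x : ι → ℕ) : Matrix (divisorsOfValues x) ι ℝ :=
  of fun d i => if (d : ℕ) ∣ x i then 1 else 0

variable {x : ι → ℕ}

theorem mulVec_divisorIncidence_injective (hx : ∀ i, x i ≠ 0) (hinj : Function.Injective x) :
    Function.Injective (divisorIncidence x).mulVec := by
  classical
  rw [← coe_mulVecLin, injective_iff_map_eq_zero]
  intro v hv
  by_contra hne
  obtain ⟨i₁, hi₁⟩ := Function.ne_iff.mp hne
  obtain ⟨i₀, hi₀, hmax⟩ := (univ.filter fun i => v i ≠ 0).exists_max_image x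
    ⟨i₁, mem_filter.mpr ⟨mem_univ _, hi₁⟩⟩
  have hmem : x i₀ ∈ divisorsOfValues x :=
    mem_biUnion.mpr ⟨i₀, mem_univ _, Nat.mem_divisors_self _ (hx i₀)⟩
  have hrow := congrFun hv ⟨x i₀, hmem⟩
  simp only [coe_mulVecLin, mulVec, dotProduct, divisorIncidence, of_apply, ite_mul, one_mul,
    zero_mul, Pi.zero_apply] at hrow
  rw [sum_eq_single i₀ (fun i _ hi => ?_) (by simp), if_pos dvd_rfl] at hrow
  · exact (mem_filter.mp hi₀).2 hrow
  split_ifs with hdvd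
  · by_contra hvi
    exact hi (hinj (le_antisymm (hmax i (mem_filter.mpr ⟨mem_univ _, hvi⟩))
      (Nat.le_of_dvd (Nat.pos_of_ne_zero (hx i)) hdvd)))
  · rfl

theorem transpose_divisorIncidence_mul_diagonal_mul (g : ℕ → ℝ) (hx : ∀ i, x i ≠ 0) :
    (divisorIncidence x)ᵀ * diagonal (fun d : divisorsOfValues x => g d) * divisorIncidence x =
      of fun i j => ∑ d ∈ (Nat.gcd (x i) (x j)).divisors, g d := by
  ext i j
  have hgcd : (divisorsOfValues x).filter (· ∣ Nat.gcd (x i) (x j)) =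
      (Nat.gcd (x i) (x j)).divisors := by
    ext d
    simp only [divisorsOfValues, mem_filter, mem_biUnion, mem_univ, true_and, Nat.mem_divisors]
    exact ⟨fun ⟨_, hd⟩ => ⟨hd, Nat.gcd_ne_zero_left (hx i)⟩,
      fun ⟨hd, _⟩ => ⟨⟨i, (Nat.dvd_gcd_iff.mp hd).1, hx i⟩, hd⟩⟩
  rw [mul_apply, of_apply, ← hgcd, sum_filter, ← sum_coe_sort (divisorsOfValues x)]
  refine sum_congr rfl fun d _ => ?_
  simp only [mul_diagonal, transpose_apply, divisorIncidence, of_apply, Nat.dvd_gcd_iff]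
  split_ifs <;> simp_all

theorem posDef_of_gcd_eq_sum_divisors {f g : ℕ → ℝ}
    (hfg : ∀ n ≠ 0, ∑ d ∈ n.divisors, g d = f n) (hg : ∀ d ≠ 0, 0 < g d)
    (hx : ∀ i, x i ≠ 0) (hinj : Function.Injective x) :
    (of fun i j => f (Nat.gcd (x i) (x j))).PosDef := by
  have hdiag : (diagonal fun d : divisorsOfValues x => g d).PosDef := by
    refine PosDef.diagonal fun ⟨d, hd⟩ => hg d ?_
    obtain ⟨i, -, hdi⟩ := mem_biUnion.mp hd
    exact Nat.ne_of_gt (Nat.pos_of_mem_divisors hdi)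
  convert hdiag.conjTranspose_mul_mul_same (mulVec_divisorIncidence_injective hx hinj) using 1
  rw [conjTranspose_eq_transpose_of_trivial, transpose_divisorIncidence_mul_diagonal_mul g hx]
  ext i j
  exact (hfg _ (Nat.gcd_ne_zero_left (hx i))).symm

end GcdMatrix

theorem one_div_lcm_rpow_eq {a : ℕ} (ha : a ≠ 0) (b : ℕ) (α : ℝ) :
    1 / (Nat.lcm a b : ℝ) ^ α = ((a : ℝ) ^ α)⁻¹ * (Nat.gcd a b : ℝ) ^ α * ((b : ℝ) ^ α)⁻¹ := by
  have hprod : (Nat.gcd a b : ℝ) ^ α * (Nat.lcm a b : ℝ) ^ α = (a : ℝ) ^ α * (b : ℝ) ^ α := by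
    rw [← Real.mul_rpow (by positivity) (by positivity), ← Real.mul_rpow (by positivity)
      (by positivity), ← Nat.cast_mul, ← Nat.cast_mul, Nat.gcd_mul_lcm]
  have hgcd : (0 : ℝ) < (Nat.gcd a b : ℝ) ^ α := by
    have := Nat.gcd_pos_of_pos_left b (Nat.pos_of_ne_zero ha)
    positivity
  rw [mul_right_comm, ← mul_inv, ← hprod, mul_inv, mul_comm, ← mul_assoc, mul_inv_cancel₀ hgcd.ne',
    one_mul, one_div]

/-- **Reciprocal power LCM matrices are positive definite**: for `α > 0` and
distinct positive integers `x 0, …, x (n-1)`, the matrix `(1 / lcm (x i) (x j) ^ α)`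
is positive definite. -/
theorem reciprocal_power_lcm_matrix_posDef {n : ℕ} (x : Fin n → ℕ)
    (hpos : ∀ i, 0 < x i) (hinj : Function.Injective x)
    {α : ℝ} (hα : 0 < α) :
    (Matrix.of fun i j => 1 / (Nat.lcm (x i) (x j) : ℝ) ^ α).PosDef := by
  have hgcd := posDef_of_gcd_eq_sum_divisors
    (fun _ hn => ArithmeticFunction.sum_divisors_jordan α hn)
    (fun _ hd => ArithmeticFunction.jordan_pos hα hd) (fun i => (hpos i).ne') hinj
  set D := diagonal fun i => ((x i : ℝ) ^ α)⁻¹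
  have hD : Function.Injective D.mulVec := by
    refine mulVec_injective_iff_isUnit.mpr (isUnit_diagonal.mpr (Pi.isUnit_iff.mpr fun i => ?_))
    have := hpos i
    exact (by positivity : (0 : ℝ) < ((x i : ℝ) ^ α)⁻¹).ne'.isUnit
  convert hgcd.conjTranspose_mul_mul_same hD using 1
  ext i j
  rw [of_apply, one_div_lcm_rpow_eq (hpos i).ne']
  simp [D, diagonal_mul, mul_diagonal]
end

section
/- Let S = {x_1,...,x_n} be a finite subset of a lattice such that A = {x_i ∧ x_j : i ≠ j} is a chain (S is an A-set). Then the meet-closure of S equals S ∪ A, and every element of S ∪ A covers at most one element of S ∪ A (i.e., S is a ∧-tree set). -/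
/-!
In a chain the meet of two elements is one of them, so `A` is closed under meets; and
`x i ⊓ (x j ⊓ x k) = (x i ⊓ x j) ⊓ (x i ⊓ x k)` is a meet of two elements of `A`
(or is itself in `A` when `i ∈ {j, k}`). Hence `S ∪ A` is meet-closed. Every element of `S ∪ A`
lying strictly below another one is in `A`, so the lower covers of any element are comparable,
hence equal.
-/

/-- The meet-closure of a set `S` in a lattice. -/
def meetClosure {P : Type*} [Lattice P] (S : Set P) : Set P :=
  ⋂₀ {T : Set P | S ⊆ T ∧ ∀ a ∈ T, ∀ b ∈ T, a ⊓ b ∈ T}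

open Set

lemma meetClosure_eq_infClosure {P : Type*} [Lattice P] (S : Set P) :
    meetClosure S = infClosure S := by
  refine le_antisymm (sInter_subset_of_mem ?_) fun _ ha _ ⟨hST, hT⟩ ↦ infClosure_min hST hT ha
  exact ⟨subset_infClosure, fun _ ha _ hb ↦ infClosed_infClosure ha hb⟩

lemma IsChain.infClosed {P : Type*} [SemilatticeInf P] {s : Set P}
    (hs : IsChain (· ≤ ·) s) : InfClosed s := by
  intro a ha b hb
  rcases hs.total ha hb with hab | hba
  · rwa [inf_eq_left.2 hab]
  · rwa [inf_eq_right.2 hba]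

lemma CovBy.eq_of_covBy_of_le {α : Type*} [PartialOrder α] {a b c : α}
    (hb : b ⋖ a) (hc : c ⋖ a) (hbc : b ≤ c) : b = c :=
  ((hb.eq_or_eq hbc hc.le).resolve_right hc.ne).symm

lemma subsingleton_covBy_of_isChain {α : Type*} [PartialOrder α] {a : α}
    (h : IsChain (· ≤ ·) {b | b < a}) : {b | b ⋖ a}.Subsingleton := by
  intro b hb c hc
  rcases h.total hb.lt hc.lt with hbc | hcb
  · exact hb.eq_of_covBy_of_le hc hbc
  · exact (hc.eq_of_covBy_of_le hb hcb).symm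

def pairwiseInfs {P ι : Type*} [Lattice P] (x : ι → P) : Set P :=
  {a : P | ∃ i j, i ≠ j ∧ a = x i ⊓ x j}

section PairwiseInfs

variable {P ι : Type*} [Lattice P] {x : ι → P}

lemma inf_mem_pairwiseInfs {i j : ι} (hij : i ≠ j) : x i ⊓ x j ∈ pairwiseInfs x :=
  ⟨i, j, hij, rfl⟩

lemma inf_inf_mem_pairwiseInfs (hA : IsChain (· ≤ ·) (pairwiseInfs x)) (i : ι) {j k : ι}
    (hjk : j ≠ k) : x i ⊓ (x j ⊓ x k) ∈ pairwiseInfs x := by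
  obtain rfl | hij := eq_or_ne i j
  · rw [← inf_assoc, inf_idem]
    exact inf_mem_pairwiseInfs hjk
  obtain rfl | hik := eq_or_ne i k
  · rw [inf_left_comm, inf_idem]
    exact inf_mem_pairwiseInfs hjk
  rw [inf_inf_distrib_left]
  exact hA.infClosed (inf_mem_pairwiseInfs hij) (inf_mem_pairwiseInfs hik)

lemma infClosed_range_union_pairwiseInfs (hA : IsChain (· ≤ ·) (pairwiseInfs x)) :
    InfClosed (range x ∪ pairwiseInfs x) := by
  rintro _ (⟨i, rfl⟩ | ⟨i, j, hij, rfl⟩) _ (⟨k, rfl⟩ | ⟨k, l, hkl, rfl⟩)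
  · obtain rfl | hik := eq_or_ne i k
    · exact Or.inl ⟨i, (inf_idem _).symm⟩
    · exact Or.inr (inf_mem_pairwiseInfs hik)
  · exact Or.inr (inf_inf_mem_pairwiseInfs hA i hkl)
  · rw [inf_comm]
    exact Or.inr (inf_inf_mem_pairwiseInfs hA k hij)
  · exact Or.inr (hA.infClosed (inf_mem_pairwiseInfs hij) (inf_mem_pairwiseInfs hkl))

lemma infClosure_range_eq_union_pairwiseInfs (hA : IsChain (· ≤ ·) (pairwiseInfs x)) :
    infClosure (range x) = range x ∪ pairwiseInfs x := by
  refine (infClosure_min subset_union_left (infClosed_range_union_pairwiseInfs hA)).antisymm ?_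
  rintro _ (ha | ⟨i, j, -, rfl⟩)
  · exact subset_infClosure ha
  · exact inf_mem_infClosure (mem_range_self i) (mem_range_self j)

lemma exists_le_of_mem_range_union_pairwiseInfs {q : P} (hq : q ∈ range x ∪ pairwiseInfs x) :
    ∃ j, q ≤ x j := by
  rcases hq with ⟨j, rfl⟩ | ⟨j, k, -, rfl⟩
  exacts [⟨j, le_rfl⟩, ⟨j, inf_le_left⟩]

lemma mem_pairwiseInfs_of_lt {p q : P} (hp : p ∈ range x ∪ pairwiseInfs x)
    (hq : q ∈ range x ∪ pairwiseInfs x) (hpq : p < q) : p ∈ pairwiseInfs x := by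
  rcases hp with ⟨i, rfl⟩ | hp
  · obtain ⟨j, hqj⟩ := exists_le_of_mem_range_union_pairwiseInfs hq
    have hij : x i < x j := hpq.trans_le hqj
    rw [← inf_eq_left.2 hij.le]
    exact inf_mem_pairwiseInfs (ne_of_apply_ne x hij.ne)
  · exact hp

end PairwiseInfs

/-- **Every `A`-set is a `∧`-tree set**: if `A = {x i ⊓ x j | i ≠ j}` is a chain,
then the meet-closure of `S = {x 0, …, x (n-1)}` equals `S ∪ A` and every element of
it covers at most one element (its Hasse diagram is a tree). -/
theorem aset_is_tree_set {P : Type*} [Lattice P] {n : ℕ} (x : Fin n → P)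
    (hA : IsChain (· ≤ ·) {a : P | ∃ i j, i ≠ j ∧ a = x i ⊓ x j}) :
    meetClosure (Set.range x) = Set.range x ∪ {a : P | ∃ i j, i ≠ j ∧ a = x i ⊓ x j} ∧
    ∀ a : meetClosure (Set.range x),
      {b : meetClosure (Set.range x) | b ⋖ a}.Subsingleton := by
  have hclosure : meetClosure (range x) = range x ∪ pairwiseInfs x := by
    rw [meetClosure_eq_infClosure, infClosure_range_eq_union_pairwiseInfs hA]
  refine ⟨hclosure, fun a ↦ subsingleton_covBy_of_isChain ?_⟩
  have hbelow (b : meetClosure (range x)) (hb : b < a) : (b : P) ∈ pairwiseInfs x :=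
    mem_pairwiseInfs_of_lt (hclosure ▸ b.2) (hclosure ▸ a.2) hb
  exact fun b hb c hc _ ↦ hA.total (hbelow b hb) (hbelow c hc)
end

section
/- Let P be a lattice, f : P → ℝ nonnegative and order-preserving on the meet-closure of S = {x_1,...,x_n}, with f(x_1) ≤ ⋯ ≤ f(x_n). If λ_1 ≤ λ_2 ≤ ⋯ ≤ λ_n are the eigenvalues of the meet matrix (f(x_i ∧ x_j))_{i,j=1}^n, then λ_k ≤ k f(x_k) for all k = 1,...,n, and moreover f(x_n) ≤ λ_n. -/
open Module Submodule Polynomial Finset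
open scoped RealInnerProductSpace

lemma subset_meetClosure {P : Type*} [Lattice P] (S : Set P) : S ⊆ meetClosure S :=
  fun _ ha _ hT => hT.1 ha

lemma inf_mem_meetClosure {P : Type*} [Lattice P] {S : Set P} {a b : P}
    (ha : a ∈ meetClosure S) (hb : b ∈ meetClosure S) : a ⊓ b ∈ meetClosure S :=
  fun T hT => hT.2 a (ha T hT) b (hb T hT)

lemma Module.Basis.finrank_span_image {K E ι : Type*} [DivisionRing K] [AddCommGroup E]
    [Module K E] (b : Basis ι K E) (s : Finset ι) :
    finrank K (span K (b '' s)) = #s := by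
  rw [Set.image_eq_range]
  exact (finrank_span_eq_card (b.linearIndependent.comp _ Subtype.val_injective)).trans (by simp)

lemma map_univ_eq_of_prod_X_sub_C_eq {ι R : Type*} [Fintype ι] [CommRing R] [IsDomain R]
    {μ ν : ι → R} (h : ∏ i, (X - C (μ i)) = ∏ i, (X - C (ν i))) :
    univ.val.map μ = univ.val.map ν := by
  have hroots (κ : ι → R) : (∏ i, (X - C (κ i))).roots = univ.val.map κ := by
    have := roots_multiset_prod_X_sub_C (univ.val.map κ)
    rwa [Multiset.map_map] at this
  rw [← hroots μ, ← hroots ν, h]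

lemma card_filter_eq_of_map_univ_eq {ι α : Type*} [Fintype ι] {μ ν : ι → α}
    (h : univ.val.map μ = univ.val.map ν) (p : α → Prop) [DecidablePred p] :
    #{i | p (μ i)} = #{i | p (ν i)} := by
  have := congrArg (Multiset.countP p) h
  rwa [Multiset.countP_map, Multiset.countP_map] at this

lemma Monotone.le_of_lt_card_filter_le {α : Type*} [LinearOrder α] {n : ℕ} {f : Fin n → α}
    (hf : Monotone f) {a : α} (k : Fin n) (hk : k.1 < #{i | f i ≤ a}) : f k ≤ a := by
  by_contra! hlt
  have hsub : ({i | f i ≤ a} : Finset (Fin n)) ⊆ Iio k := fun i hi =>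
    mem_Iio.mpr <| lt_of_not_ge fun hki => (hlt.trans_le (hf hki)).not_ge (mem_filter.mp hi).2
  have := card_le_card hsub
  rw [Fin.card_Iio] at this
  omega

lemma EuclideanSpace.mem_span_basisFun_image {𝕜 ι : Type*} [RCLike 𝕜] [Fintype ι] {s : Set ι}
    {v : EuclideanSpace 𝕜 ι} :
    v ∈ span 𝕜 ((EuclideanSpace.basisFun ι 𝕜).toBasis '' s) ↔ ∀ i ∉ s, v i = 0 := by
  rw [Basis.mem_span_image]
  simp [Finsupp.support_subset_iff]

section Eigenbasis

variable {ι E : Type*} [Fintype ι] [NormedAddCommGroup E] [InnerProductSpace ℝ E]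
  (b : OrthonormalBasis ι ℝ E) (μ : ι → ℝ) {T : E →ₗ[ℝ] E}

lemma inner_map_self_eq_sum_eigenvalues (hT : ∀ i, T (b i) = μ i • b i) (v : E) :
    ⟪T v, v⟫ = ∑ i, μ i * ⟪b i, v⟫ ^ 2 := by
  have hTv : T v = ∑ i, ⟪b i, v⟫ • μ i • b i := by
    conv_lhs => rw [← b.sum_repr' v]
    simp only [map_sum, map_smul, hT]
  simp only [hTv, sum_inner, real_inner_smul_left]
  exact sum_congr rfl fun i _ => by ring

lemma mul_norm_sq_lt_inner_map_self (hT : ∀ i, T (b i) = μ i • b i) {v : E} (hv : v ≠ 0)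
    {B : ℝ} (hμ : ∀ i, ⟪b i, v⟫ ≠ 0 → B < μ i) : B * ‖v‖ ^ 2 < ⟪T v, v⟫ := by
  have hnorm : 0 < ∑ i, ⟪b i, v⟫ ^ 2 := by rw [b.sum_sq_inner_right]; positivity
  obtain ⟨j, -, hj⟩ := exists_ne_zero_of_sum_ne_zero hnorm.ne'
  rw [← b.sum_sq_inner_right, mul_sum, inner_map_self_eq_sum_eigenvalues b μ hT]
  refine sum_lt_sum (fun i _ => ?_) ⟨j, mem_univ j, ?_⟩
  · by_cases hi : ⟪b i, v⟫ = 0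
    · simp [hi]
    · exact mul_le_mul_of_nonneg_right (hμ i hi).le (sq_nonneg _)
  · exact mul_lt_mul_of_pos_right (hμ j (pow_ne_zero_iff two_ne_zero |>.mp hj)) (by positivity)

lemma exists_le_eigenvalue_of_mul_norm_sq_le (hT : ∀ i, T (b i) = μ i • b i) {v : E}
    (hv : v ≠ 0) {B : ℝ} (hB : B * ‖v‖ ^ 2 ≤ ⟪T v, v⟫) : ∃ i, B ≤ μ i := by
  by_contra! hμ
  have := mul_norm_sq_lt_inner_map_self b (-μ) (T := -T) (by simp [hT]) hv
    (B := -B) fun i _ => neg_lt_neg (hμ i)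
  simp only [LinearMap.neg_apply, inner_neg_left] at this
  linarith

lemma finrank_le_card_eigenvalues_le (hT : ∀ i, T (b i) = μ i • b i) {V : Submodule ℝ E}
    {B : ℝ} (hV : ∀ v ∈ V, ⟪T v, v⟫ ≤ B * ‖v‖ ^ 2) : finrank ℝ V ≤ #{i | μ i ≤ B} := by
  classical
  have := Module.Finite.of_basis b.toBasis
  let W := span ℝ (b.toBasis '' ↑({i | B < μ i} : Finset ι))
  have hdisj : Disjoint V W := by
    rw [Submodule.disjoint_def]
    intro v hvV hvW
    by_contra hv
    refine (hV v hvV).not_gt (mul_norm_sq_lt_inner_map_self b μ hT hv fun i hi => ?_)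
    have hsupp := (Basis.mem_span_image _).mp hvW
    have hi' : i ∈ (b.toBasis.repr v).support := by
      simpa [OrthonormalBasis.coe_toBasis_repr_apply, b.repr_apply_apply] using hi
    simpa using hsupp hi'
  have := Submodule.finrank_add_finrank_le_of_disjoint hdisj
  rw [b.toBasis.finrank_span_image, finrank_eq_card_basis b.toBasis] at this
  have := card_filter_add_card_filter_not (s := univ) (p := fun i => μ i ≤ B)
  simp only [not_le, card_univ] at this
  omega

end Eigenbasis

namespace Matrix

lemma IsHermitian.toEuclideanLin_eigenvectorBasis {𝕜 ι : Type*} [RCLike 𝕜] [Fintype ι]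
    [DecidableEq ι] {A : Matrix ι ι 𝕜} (hA : A.IsHermitian) (i : ι) :
    toEuclideanLin A (hA.eigenvectorBasis i) = hA.eigenvalues i • hA.eigenvectorBasis i := by
  ext1
  simpa [toLpLin_apply] using congrFun (hA.mulVec_eigenvectorBasis i) _

variable {ι : Type*} [Fintype ι] [DecidableEq ι]

lemma inner_toEuclideanLin_self_le (M : Matrix ι ι ℝ) (s : Finset ι) {c : ℝ} (hc : 0 ≤ c)
    (hM : ∀ i ∈ s, ∀ j ∈ s, 0 ≤ M i j ∧ M i j ≤ c) {v : EuclideanSpace ℝ ι}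
    (hv : ∀ i ∉ s, v i = 0) :
    ⟪toEuclideanLin M v, v⟫ ≤ #s * c * ‖v‖ ^ 2 := by
  have hterm (i j : ι) : v i * M i j * v j ≤ c * (|v i| * |v j|) := by
    by_cases hij : i ∈ s ∧ j ∈ s
    · obtain ⟨hM0, hMc⟩ := hM i hij.1 j hij.2
      calc v i * M i j * v j ≤ |v i * M i j * v j| := le_abs_self _
        _ = |v i| * M i j * |v j| := by rw [abs_mul, abs_mul, abs_of_nonneg hM0]
        _ ≤ |v i| * c * |v j| := by gcongr
        _ = c * (|v i| * |v j|) := by ring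
    · rcases not_and_or.mp hij with hi | hj
      · simp only [hv i hi, zero_mul]; positivity
      · simp only [hv j hj, mul_zero]; positivity
  have hsupp : ∑ i, |v i| = ∑ i ∈ s, |v i| :=
    (sum_subset (subset_univ s) fun i _ hi => by simp [hv i hi]).symm
  have hnorm : ∑ i ∈ s, |v i| ^ 2 ≤ ‖v‖ ^ 2 := by
    rw [EuclideanSpace.norm_sq_eq]
    simp only [Real.norm_eq_abs]
    exact sum_le_sum_of_subset_of_nonneg (subset_univ s) fun i _ _ => sq_nonneg _
  calc ⟪toEuclideanLin M v, v⟫ = ∑ i, ∑ j, v i * M i j * v j := by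
        simp [PiLp.inner_apply, toLpLin_apply, mulVec, dotProduct, mul_sum, mul_assoc]
    _ ≤ ∑ i, ∑ j, c * (|v i| * |v j|) := sum_le_sum fun i _ => sum_le_sum fun j _ => hterm i j
    _ = c * (∑ i ∈ s, |v i|) ^ 2 := by rw [← hsupp, sq, sum_mul_sum, mul_sum]; simp_rw [mul_sum]
    _ ≤ c * (#s * ∑ i ∈ s, |v i| ^ 2) := mul_le_mul_of_nonneg_left sq_sum_le_card_mul_sum_sq hc
    _ ≤ #s * c * ‖v‖ ^ 2 := by nlinarith [mul_le_mul_of_nonneg_left hnorm hc]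

end Matrix

/-- **Eigenvalue bounds for meet matrices**: if `f` is nonnegative,
order-preserving on the meet-closure of `S`, increasing along the indexing, and
`λ 0 ≤ λ 1 ≤ ⋯ ≤ λ (n-1)` are the eigenvalues (with multiplicity, i.e. roots of
the characteristic polynomial) of the meet matrix `(f (x i ⊓ x j))`, then
`λ k ≤ (k+1) * f (x k)` for each (0-indexed) `k`, and `f (x (n-1)) ≤ λ (n-1)`. -/
theorem meet_matrix_eigenvalue_bounds {P : Type*} [Lattice P] {n : ℕ} (hn : 0 < n)
    (x : Fin n → P) (f : P → ℝ)
    (hf_nonneg : ∀ a, 0 ≤ f a)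
    (hf_mono : ∀ a ∈ meetClosure (Set.range x), ∀ b ∈ meetClosure (Set.range x),
      a ≤ b → f a ≤ f b)
    (hinc : ∀ i j : Fin n, i ≤ j → f (x i) ≤ f (x j))
    (lam : Fin n → ℝ) (hlam_mono : Monotone lam)
    (hlam : (Matrix.of fun i j => f (x i ⊓ x j)).charpoly =
      ∏ i, (Polynomial.X - Polynomial.C (lam i))) :
    (∀ k : Fin n, lam k ≤ (k.1 + 1 : ℝ) * f (x k)) ∧
      f (x ⟨n - 1, by omega⟩) ≤ lam ⟨n - 1, by omega⟩ := by
  classical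
  set M : Matrix (Fin n) (Fin n) ℝ := Matrix.of fun i j => f (x i ⊓ x j)
  have hM : M.IsHermitian := by ext i j; simp [M, inf_comm]
  have hmem (i : Fin n) : x i ∈ meetClosure (Set.range x) := subset_meetClosure _ ⟨i, rfl⟩
  have hentry (i j : Fin n) : M i j ≤ f (x i) :=
    hf_mono _ (inf_mem_meetClosure (hmem i) (hmem j)) _ (hmem i) inf_le_left
  have hT := hM.toEuclideanLin_eigenvectorBasis
  have hcard := card_filter_eq_of_map_univ_eq <| map_univ_eq_of_prod_X_sub_C_eq <| by
    simpa using hM.charpoly_eq.symm.trans hlam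
  constructor
  · intro k
    have hV : ∀ v ∈ span ℝ ((EuclideanSpace.basisFun (Fin n) ℝ).toBasis '' ↑(Iic k)),
        ⟪Matrix.toEuclideanLin M v, v⟫ ≤ (k.1 + 1) * f (x k) * ‖v‖ ^ 2 := by
      intro v hv
      simpa using M.inner_toEuclideanLin_self_le (Iic k) (hf_nonneg _)
        (fun i hi j _ => ⟨hf_nonneg _, (hentry i j).trans (hinc i k (mem_Iic.mp hi))⟩)
        (EuclideanSpace.mem_span_basisFun_image.mp hv)
    have hcount := finrank_le_card_eigenvalues_le _ _ hT hV
    rw [Basis.finrank_span_image, Fin.card_Iic, hcard (· ≤ _)] at hcount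
    exact hlam_mono.le_of_lt_card_filter_le k hcount
  · set l : Fin n := ⟨n - 1, by omega⟩
    set e := EuclideanSpace.single l (1 : ℝ)
    have hdiag : f (x l) * ‖e‖ ^ 2 ≤ ⟪Matrix.toEuclideanLin M e, e⟫ := by
      simp [e, M, Matrix.toLpLin_apply, EuclideanSpace.inner_single_right]
    obtain ⟨i, hi⟩ := exists_le_eigenvalue_of_mul_norm_sq_le _ _ hT (by simp [e]) hdiag
    obtain ⟨j, hj⟩ := card_pos.mp <| (hcard (f (x l) ≤ ·)) ▸ card_pos.mpr ⟨i, by simpa using hi⟩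
    exact (mem_filter.mp hj).2.trans (hlam_mono (Fin.le_iff_val_le_val.mpr (by simp [l]; omega)))
end
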